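/- arXiv:2509.13645 — 2 statements merged into one kernel-verified Lean document; each statement's English description precedes it below -/
import Mathlib

section
/- (Nonnegativity of the weighted functional) There exists k₀ > 3 such that for every k ≥ k₀ and every t ≥ 0, G_k(t) ≥ 0. -/
open MeasureTheory Real

noncomputable section

/-- The plane `ℝ²`. -/
abbrev E2 : Type := EuclideanSpace ℝ (Fin 2)

/-- The Laplacian of `f : ℝ² → ℝ`, as the sum of the second partial derivatives. -/
noncomputable def lap (f : E2 → ℝ) (x : E2) : ℝ :=
  ∑ i : Fin 2,
    fderiv ℝ (fun y => fderiv ℝ f y (EuclideanSpace.single i 1)) x (EuclideanSpace.single i 1)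

/-- The time derivative `u_t` of `u : ℝ → ℝ² → ℝ`. -/
noncomputable def dt (u : ℝ → E2 → ℝ) (t : ℝ) (x : E2) : ℝ :=
  deriv (fun s => u s x) t

/-- The total energy `E_u(t) = (1/2) ∫ (|u_t|² + |∇u|²) dx`. -/
noncomputable def energy (u : ℝ → E2 → ℝ) (t : ℝ) : ℝ :=
  (1 / 2) * ∫ x : E2, ((dt u t x) ^ 2 + ‖gradient (u t) x‖ ^ 2)

/-- The radial multiplier weight: `φ(r) = ε₀` for `0 ≤ r ≤ L`, `φ(r) = ε₀ L / r` for `r ≥ L`. -/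
noncomputable def phi (ε₀ L r : ℝ) : ℝ := if r ≤ L then ε₀ else ε₀ * L / r

/-- The weighted functional `G_k(t)` with `α = (3/4)ε₀`:
`G_k(t) = ∫ u_t φ(|x|)(x·∇u) dx + α ∫ u_t u dx + (α/2) ∫ a |u|² dx + k E_u(t)`. -/
noncomputable def Gfun (ε₀ L : ℝ) (a : E2 → ℝ) (u : ℝ → E2 → ℝ) (k t : ℝ) : ℝ :=
  (∫ x : E2, dt u t x * phi ε₀ L ‖x‖ * (inner ℝ x (gradient (u t) x) : ℝ)) +
    (3 / 4) * ε₀ * (∫ x : E2, dt u t x * u t x) +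
    ((3 / 4) * ε₀ / 2) * (∫ x : E2, a x * (u t x) ^ 2) +
    k * energy u t


-- ## Auxiliary lemmas

lemma integrable_of_vanish {E : Type*} [NormedAddCommGroup E] [ProperSpace E]
    [MeasureSpace E] [OpensMeasurableSpace E] [IsFiniteMeasureOnCompacts (volume : Measure E)]
    (f : E → ℝ) (hc : Continuous f) (M : ℝ) (h : ∀ x, M < ‖x‖ → f x = 0) :
    Integrable f := by
  apply hc.integrable_of_hasCompactSupport
  apply HasCompactSupport.intro (isCompact_closedBall (0:E) M)
  intro x hx
  exact h x (by simpa [Metric.mem_closedBall, dist_zero_right, not_le] using hx)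

lemma fderiv_vanish_far {f : E2 → ℝ} {M : ℝ} (h : ∀ x, M < ‖x‖ → f x = 0)
    {x : E2} (hx : M < ‖x‖) : fderiv ℝ f x = 0 := by
  have hev : f =ᶠ[nhds x] (fun _ => (0:ℝ)) := by
    have hopen : IsOpen {y : E2 | M < ‖y‖} := isOpen_lt continuous_const continuous_norm
    filter_upwards [hopen.mem_nhds hx] with y hy using h y hy
  rw [hev.fderiv_eq, fderiv_fun_const]
  rfl

lemma gradient_vanish_far {f : E2 → ℝ} {M : ℝ} (h : ∀ x, M < ‖x‖ → f x = 0)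
    {x : E2} (hx : M < ‖x‖) : gradient f x = 0 := by
  rw [gradient, fderiv_vanish_far h hx, map_zero]

lemma inner_gradient {f : E2 → ℝ} {x y : E2} :
    (inner ℝ (gradient f x) y : ℝ) = fderiv ℝ f x y :=
  InnerProductSpace.toDual_symm_apply

lemma continuous_gradient {f : E2 → ℝ} (hf : ContDiff ℝ (⊤ : ℕ∞) f) : Continuous (gradient f) := by
  have h1 : Continuous (fderiv ℝ f) := hf.continuous_fderiv (by simp)
  exact (LinearIsometryEquiv.continuous _).comp h1

lemma oneD (f f' : ℝ → ℝ) (hd : ∀ s, HasDerivAt f (f' s) s)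
    (hcf : Continuous f) (hcf' : Continuous f')
    (ε : ℝ) (hε : 0 < ε)
    (hint : Integrable (fun s => ε * f s ^ 2 + (f' s) ^ 2 / ε))
    (B : ℝ) (hB : f B = 0) (x : ℝ) (hxB : x ≤ B) :
    f x ^ 2 ≤ ∫ s, (ε * f s ^ 2 + (f' s) ^ 2 / ε) := by
  have h1 : ∫ s in x..B, (2 * f s * f' s) = f B ^ 2 - f x ^ 2 := by
    apply intervalIntegral.integral_eq_sub_of_hasDerivAt
    · intro s _
      simpa [mul_comm, mul_assoc, pow_two] using ((hd s).fun_pow 2)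
    · exact (Continuous.intervalIntegrable (by continuity) x B)
  have h2 : ∫ s in x..B, (-(2 * f s * f' s)) = f x ^ 2 := by
    rw [intervalIntegral.integral_neg, h1, hB]; ring
  have h3 : f x ^ 2 ≤ ∫ s in x..B, (ε * f s ^ 2 + (f' s) ^ 2 / ε) := by
    rw [← h2]
    apply intervalIntegral.integral_mono_on hxB
    · exact (Continuous.intervalIntegrable (by continuity) x B)
    · exact hint.intervalIntegrable
    · intro s _
      have key : ε * f s ^ 2 + f' s ^ 2 / ε + 2 * f s * f' s = (ε * f s + f' s) ^ 2 / ε := by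
        field_simp; ring
      have h5 := div_nonneg (sq_nonneg (ε * f s + f' s)) hε.le
      linarith
  refine h3.trans ?_
  rw [intervalIntegral.integral_of_le hxB]
  apply setIntegral_le_integral hint
  filter_upwards with s
  positivity

def m2e : (ℝ × ℝ) ≃ᵐ E2 :=
  MeasurableEquiv.finTwoArrow.symm.trans (MeasurableEquiv.toLp 2 (Fin 2 → ℝ))

lemma m2e_mp : MeasurePreserving m2e :=
  ((EuclideanSpace.volume_preserving_symm_measurableEquiv_toLp (Fin 2)).symm).comp
    ((volume_preserving_finTwoArrow ℝ).symm)

lemma m2e_apply (p : ℝ × ℝ) :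
    m2e p = p.1 • EuclideanSpace.single (0:Fin 2) (1:ℝ) + p.2 • EuclideanSpace.single 1 1 := by
  ext i; fin_cases i <;> simp [m2e, MeasurableEquiv.coe_toLp]

lemma m2e_norm (p : ℝ × ℝ) : ‖m2e p‖ = Real.sqrt (p.1^2 + p.2^2) := by
  rw [EuclideanSpace.norm_eq]
  congr 1
  simp [m2e, MeasurableEquiv.coe_toLp, Fin.sum_univ_two, sq]

lemma abs_fst_le (p : ℝ × ℝ) : |p.1| ≤ ‖m2e p‖ := by
  rw [m2e_norm, ← Real.sqrt_sq_eq_abs]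
  exact Real.sqrt_le_sqrt (by nlinarith [sq_nonneg p.2])

lemma abs_snd_le (p : ℝ × ℝ) : |p.2| ≤ ‖m2e p‖ := by
  rw [m2e_norm, ← Real.sqrt_sq_eq_abs]
  exact Real.sqrt_le_sqrt (by nlinarith [sq_nonneg p.1])

lemma continuous_m2e : Continuous (⇑m2e) := by
  have : ⇑m2e = fun p : ℝ × ℝ =>
      p.1 • EuclideanSpace.single (0:Fin 2) (1:ℝ) + p.2 • EuclideanSpace.single 1 1 :=
    funext m2e_apply
  rw [this]
  continuity

theorem poincare (L : ℝ) (hL : 0 < L) (v : E2 → ℝ) (hv : ContDiff ℝ (⊤ : ℕ∞) v)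
    (M : ℝ) (hM : 0 < M) (hsupp : ∀ x : E2, M < ‖x‖ → v x = 0) :
    (∫ x in Metric.closedBall (0:E2) L, (v x)^2) ≤
      (∫ x in {y : E2 | L < ‖y‖}, (v x)^2) + 16*L^2 * ∫ x : E2, ‖gradient v x‖^2 := by
  classical
  set e₂ : E2 := EuclideanSpace.single (1 : Fin 2) (1:ℝ) with he₂
  set w : ℝ × ℝ → ℝ := fun p => v (m2e p) with hw
  set d2 : ℝ × ℝ → ℝ := fun p => fderiv ℝ v (m2e p) e₂ with hd2
  have hvc : Continuous v := hv.continuous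
  have hwc : Continuous w := hvc.comp continuous_m2e
  have hfdc : Continuous (fun p => fderiv ℝ v (m2e p)) :=
    (hv.continuous_fderiv (by simp)).comp continuous_m2e
  have hd2c : Continuous d2 := hfdc.clm_apply continuous_const
  have hgc : Continuous (gradient v) := continuous_gradient hv
  -- support facts
  have hwsupp : ∀ p : ℝ × ℝ, M < ‖m2e p‖ → w p = 0 := fun p hp => hsupp _ hp
  have hd2supp : ∀ p : ℝ × ℝ, M < ‖m2e p‖ → d2 p = 0 := by
    intro p hp; simp only [hd2]; rw [fderiv_vanish_far hsupp hp]; rfl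
  have hd2le : ∀ p : ℝ × ℝ, (d2 p)^2 ≤ ‖gradient v (m2e p)‖^2 := by
    intro p
    have h1 : d2 p = (inner ℝ (gradient v (m2e p)) e₂ : ℝ) := (inner_gradient).symm
    have h2 : |(inner ℝ (gradient v (m2e p)) e₂ : ℝ)| ≤ ‖gradient v (m2e p)‖ * ‖e₂‖ :=
      abs_real_inner_le_norm _ _
    have h3 : ‖e₂‖ = 1 := by simp [he₂, EuclideanSpace.norm_single]
    rw [h3, mul_one] at h2
    calc (d2 p)^2 = |d2 p|^2 := (sq_abs _).symm
      _ ≤ ‖gradient v (m2e p)‖^2 := by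
          apply pow_le_pow_left₀ (abs_nonneg _) _ 2
          rw [h1]; exact h2
  -- derivative along second coordinate
  have hderiv : ∀ (x t : ℝ), HasDerivAt (fun s => w (x, s)) (d2 (x, t)) t := by
    intro x t
    have hline : HasDerivAt (fun s : ℝ => m2e (x, s)) e₂ t := by
      have : (fun s : ℝ => m2e (x, s)) = fun s : ℝ =>
          x • EuclideanSpace.single (0:Fin 2) (1:ℝ) + s • e₂ := by
        funext s; exact m2e_apply (x, s)
      rw [this]
      simpa using ((hasDerivAt_id t).smul_const e₂).const_add
        (x • EuclideanSpace.single (0:Fin 2) (1:ℝ))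
    have hdv : HasFDerivAt v (fderiv ℝ v (m2e (x, t))) (m2e (x, t)) :=
      (hv.differentiable (by simp) _).hasFDerivAt
    exact hdv.comp_hasDerivAt t hline
  -- the epsilon and the combined integrand
  set ε : ℝ := 1/(4*L) with hεdef
  have hεpos : 0 < ε := by positivity
  set g2 : ℝ × ℝ → ℝ := fun p => ε * w p^2 + (d2 p)^2/ε with hg2
  have hnorm_le : ∀ p : ℝ × ℝ, ‖p‖ ≤ ‖m2e p‖ := by
    intro p
    rw [Prod.norm_def]
    exact max_le (by simpa [Real.norm_eq_abs] using abs_fst_le p)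
      (by simpa [Real.norm_eq_abs] using abs_snd_le p)
  have hg2c : Continuous g2 := ((continuous_const.mul (hwc.pow 2)).add ((hd2c.pow 2).div_const ε))
  have hg2van : ∀ p : ℝ × ℝ, M < ‖p‖ → g2 p = 0 := by
    intro p hp
    have h := lt_of_lt_of_le hp (hnorm_le p)
    simp [hg2, hwsupp p h, hd2supp p h]
  have hg2int : Integrable g2 := integrable_of_vanish _ hg2c M hg2van
  have hw2int : Integrable (fun p : ℝ × ℝ => w p ^ 2) := by
    apply integrable_of_vanish _ (hwc.pow 2) M
    intro p hp
    simp [hwsupp p (lt_of_lt_of_le hp (hnorm_le p))]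
  have hd2int : Integrable (fun p : ℝ × ℝ => (d2 p) ^ 2) := by
    apply integrable_of_vanish _ (hd2c.pow 2) M
    intro p hp
    simp [hd2supp p (lt_of_lt_of_le hp (hnorm_le p))]
  have hgrad2int : Integrable (fun p : ℝ × ℝ => ‖gradient v (m2e p)‖ ^ 2) := by
    apply integrable_of_vanish _ (((hgc.comp continuous_m2e).norm).pow 2) M
    intro p hp
    simp only [Function.comp_apply, Pi.pow_apply]
    rw [gradient_vanish_far hsupp (lt_of_lt_of_le hp (hnorm_le p))]
    simp
  have hv2int : Integrable (fun x : E2 => (v x) ^ 2) := by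
    apply integrable_of_vanish _ (hvc.pow 2) M
    intro x hx; simp [hsupp x hx]
  -- slice integrability and the pointwise slice bound
  set B : ℝ := max L M + 1 with hB
  have hBM : M < B := by
    have := le_max_right L M
    simp only [hB]; linarith
  have hsl : ∀ x : ℝ, Integrable (fun t => ε * w (x, t) ^ 2 + (d2 (x, t)) ^ 2 / ε) := by
    intro x
    apply integrable_of_vanish _ (hg2c.comp (Continuous.prodMk_right x)) M
    intro t ht
    have h2 : M < ‖m2e (x, t)‖ := lt_of_lt_of_le (by simpa using ht) (abs_snd_le (x, t))
    simp [hg2, hwsupp _ h2, hd2supp _ h2]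
  set h1 : ℝ → ℝ := fun x => ∫ t, (ε * w (x, t) ^ 2 + (d2 (x, t)) ^ 2 / ε) with hh1
  have hkey : ∀ x t : ℝ, t ≤ B → w (x, t) ^ 2 ≤ h1 x := by
    intro x t htB
    apply oneD (fun s => w (x, s)) (fun s => d2 (x, s)) (hderiv x)
      (hwc.comp (Continuous.prodMk_right x)) (hd2c.comp (Continuous.prodMk_right x)) ε hεpos (hsl x) B ?_ t htB
    apply hwsupp
    calc M < B := hBM
      _ = |B| := (abs_of_pos (by positivity)).symm
      _ ≤ ‖m2e (x, B)‖ := abs_snd_le (x, B)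
  have hh1nonneg : ∀ x, 0 ≤ h1 x := by
    intro x
    apply integral_nonneg
    intro t
    positivity
  -- integrals over the square
  set Isq : Set ℝ := Set.Icc (-L) L with hIsq
  have hprod : (volume : Measure (ℝ × ℝ)) = (volume : Measure ℝ).prod volume :=
    Measure.volume_eq_prod ℝ ℝ
  have hVeq : (∫ x in Metric.closedBall (0:E2) L, (v x)^2)
      = ∫ p in m2e ⁻¹' (Metric.closedBall (0:E2) L), w p ^ 2 :=
    (m2e_mp.setIntegral_preimage_emb m2e.measurableEmbedding _ _).symm
  have hstep1 : (∫ p in m2e ⁻¹' (Metric.closedBall (0:E2) L), w p ^ 2)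
      ≤ ∫ p in Isq ×ˢ Isq, w p ^ 2 := by
    apply setIntegral_mono_set hw2int.integrableOn
    · filter_upwards with p using sq_nonneg _
    · apply HasSubset.Subset.eventuallyLE
      intro p hp
      have h2 : ‖m2e p‖ ≤ L := by
        simpa [Metric.mem_closedBall, dist_zero_right] using hp
      constructor
      · exact abs_le.1 ((abs_fst_le p).trans h2)
      · exact abs_le.1 ((abs_snd_le p).trans h2)
  have hw2sq : IntegrableOn (fun p : ℝ × ℝ => w p ^ 2) (Isq ×ˢ Isq) ((volume : Measure ℝ).prod volume) := by
    rw [← hprod]; exact hw2int.integrableOn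
  have hstep2 : (∫ p in Isq ×ˢ Isq, w p ^ 2)
      = ∫ x in Isq, (∫ y in Isq, w (x, y) ^ 2) := by
    rw [hprod]
    exact setIntegral_prod _ hw2sq
  have hinner_int : IntegrableOn (fun x => ∫ y in Isq, w (x, y) ^ 2) Isq := by
    have h3 := hw2sq
    rw [IntegrableOn, ← Measure.prod_restrict] at h3
    exact h3.integral_prod_left
  have hh1int : Integrable h1 := by
    have h4 : Integrable g2 ((volume : Measure ℝ).prod volume) := by rw [← hprod]; exact hg2int
    exact h4.integral_prod_left
  have hstep3 : ∀ x : ℝ, (∫ y in Isq, w (x, y) ^ 2) ≤ 2 * L * h1 x := by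
    intro x
    have hle : ∀ y ∈ Isq, w (x, y) ^ 2 ≤ h1 x := by
      intro y hy
      apply hkey x y
      have : y ≤ L := hy.2
      have : L ≤ max L M := le_max_left L M
      simp only [hB]; linarith [hy.2]
    calc (∫ y in Isq, w (x, y) ^ 2) ≤ ∫ _ in Isq, h1 x := by
          apply setIntegral_mono_on
          · exact (((hwc.comp (Continuous.prodMk_right x)).pow 2).continuousOn).integrableOn_compact isCompact_Icc
          · exact integrableOn_const measure_Icc_lt_top.ne
          · exact measurableSet_Icc
          · exact hle
      _ = 2 * L * h1 x := by
          rw [setIntegral_const]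
          simp only [hIsq, Real.volume_Icc, smul_eq_mul]
          rw [measureReal_def, Real.volume_Icc, ENNReal.toReal_ofReal (by linarith)]
          ring
  have hstep4 : (∫ x in Isq, (∫ y in Isq, w (x, y) ^ 2)) ≤ ∫ x in Isq, 2 * L * h1 x := by
    apply setIntegral_mono_on hinner_int ((hh1int.const_mul _).integrableOn) measurableSet_Icc
    intro x _
    exact hstep3 x
  have hstep5 : (∫ x in Isq, 2 * L * h1 x) ≤ ∫ x, 2 * L * h1 x := by
    apply setIntegral_le_integral (hh1int.const_mul _)
    filter_upwards with x
    have := hh1nonneg x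
    positivity
  have hstep6 : (∫ x, 2 * L * h1 x) = 2 * L * ∫ p, g2 p := by
    rw [integral_const_mul]
    congr 1
    rw [hprod]
    exact (integral_prod _ (by rw [← hprod]; exact hg2int)).symm
  have hstep7 : (∫ p, g2 p) = ε * (∫ p, w p ^ 2) + (∫ p : ℝ × ℝ, (d2 p) ^ 2) / ε := by
    simp only [hg2]
    rw [integral_add (hw2int.const_mul ε) (hd2int.div_const ε), integral_const_mul,
      integral_div]
  have hstep8 : (∫ p : ℝ × ℝ, (d2 p) ^ 2) ≤ ∫ p : ℝ × ℝ, ‖gradient v (m2e p)‖ ^ 2 :=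
    integral_mono hd2int hgrad2int hd2le
  have hSeq : (∫ p, w p ^ 2) = ∫ x : E2, (v x) ^ 2 :=
    m2e_mp.integral_comp m2e.measurableEmbedding (fun x => (v x) ^ 2)
  have hQeq : (∫ p : ℝ × ℝ, ‖gradient v (m2e p)‖ ^ 2) = ∫ x : E2, ‖gradient v x‖ ^ 2 :=
    m2e_mp.integral_comp m2e.measurableEmbedding (fun x => ‖gradient v x‖ ^ 2)
  have hcompl : (Metric.closedBall (0:E2) L)ᶜ = {y : E2 | L < ‖y‖} := by
    ext y
    simp [Metric.mem_closedBall, dist_zero_right, not_le]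
  have hsplit : (∫ x in Metric.closedBall (0:E2) L, (v x)^2)
      + (∫ x in {y : E2 | L < ‖y‖}, (v x)^2) = ∫ x : E2, (v x) ^ 2 := by
    rw [← hcompl]
    exact integral_add_compl measurableSet_closedBall hv2int
  -- final assembly
  set V := ∫ x in Metric.closedBall (0:E2) L, (v x)^2
  set W := ∫ x in {y : E2 | L < ‖y‖}, (v x)^2
  set Q := ∫ x : E2, ‖gradient v x‖ ^ 2
  set Qd := ∫ p : ℝ × ℝ, (d2 p) ^ 2
  have hmain : V ≤ 2 * L * (ε * (V + W) + Qd / ε) := by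
    calc V = ∫ p in m2e ⁻¹' (Metric.closedBall (0:E2) L), w p ^ 2 := hVeq
      _ ≤ ∫ p in Isq ×ˢ Isq, w p ^ 2 := hstep1
      _ = ∫ x in Isq, (∫ y in Isq, w (x, y) ^ 2) := hstep2
      _ ≤ ∫ x in Isq, 2 * L * h1 x := hstep4
      _ ≤ ∫ x, 2 * L * h1 x := hstep5
      _ = 2 * L * ∫ p, g2 p := hstep6
      _ = 2 * L * (ε * (∫ p, w p ^ 2) + Qd / ε) := by rw [hstep7]
      _ = 2 * L * (ε * (V + W) + Qd / ε) := by rw [hSeq, ← hsplit]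
  have hexp : 2 * L * (ε * (V + W) + Qd / ε) = (V + W) / 2 + 8 * L^2 * Qd := by
    have hLne : L ≠ 0 := ne_of_gt hL
    simp only [hεdef]
    field_simp
    ring
  rw [hexp] at hmain
  have hQd : Qd ≤ Q := hstep8.trans_eq hQeq
  nlinarith [mul_le_mul_of_nonneg_left hQd (by positivity : (0:ℝ) ≤ 8 * L^2)]

set_option maxHeartbeats 1000000

/-- Nonnegativity of the weighted functional: there is `k₀ > 3` such that `G_k(t) ≥ 0`
for every `k ≥ k₀` and `t ≥ 0`. -/
theorem weighted_functional_nonneg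
    (R L ε₀ : ℝ) (hR : 0 < R) (hL : 0 < L) (hε₀ : 0 < ε₀)
    (a : E2 → ℝ) (ha : ContDiff ℝ 2 a) (ha0 : ∀ x, 0 ≤ a x)
    (habd : ∃ M : ℝ, ∀ x, a x ≤ M)
    (haL : ∀ x : E2, L < ‖x‖ → ε₀ ≤ a x)
    (u₀ u₁ : E2 → ℝ)
    (hu₀ : ContDiff ℝ (⊤ : ℕ∞) u₀) (hu₁ : ContDiff ℝ (⊤ : ℕ∞) u₁)
    (hsupp₀ : Function.support u₀ ⊆ Metric.closedBall 0 R)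
    (hsupp₁ : Function.support u₁ ⊆ Metric.closedBall 0 R)
    (u : ℝ → E2 → ℝ)
    (hu : ContDiff ℝ (⊤ : ℕ∞) (fun p : ℝ × E2 => u p.1 p.2))
    (hpde : ∀ t : ℝ, 0 < t → ∀ x : E2,
      deriv (fun s => dt u s x) t - lap (u t) x + a x * dt u t x = 0)
    (hic0 : ∀ x, u 0 x = u₀ x) (hic1 : ∀ x, dt u 0 x = u₁ x)
    (hfin : ∀ t : ℝ, 0 ≤ t → ∀ x : E2, R + t < ‖x‖ → u t x = 0) :
    ∃ k₀ : ℝ, 3 < k₀ ∧ ∀ k ≥ k₀, ∀ t : ℝ, 0 ≤ t → 0 ≤ Gfun ε₀ L a u k t := by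
  classical
  refine ⟨4 + ε₀*L + 6*ε₀^2*L^2, by nlinarith [mul_pos hε₀ hL, mul_pos (mul_pos hε₀ hε₀) (mul_pos hL hL)], ?_⟩
  intro k hk t ht
  set M : ℝ := R + t with hMdef
  have hM : 0 < M := by positivity
  -- phi facts
  have hphi_eq : ∀ r : ℝ, phi ε₀ L r = ε₀ * L / max L r := by
    intro r
    rw [phi]
    split_ifs with h
    · rw [max_eq_left h]
      field_simp
    · rw [max_eq_right (le_of_lt (lt_of_not_ge h))]
  have hphi_nonneg : ∀ r : ℝ, 0 ≤ phi ε₀ L r := by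
    intro r
    rw [hphi_eq]
    apply div_nonneg (by positivity)
    exact le_trans hL.le (le_max_left _ _)
  have hphi_mul : ∀ r : ℝ, 0 ≤ r → phi ε₀ L r * r ≤ ε₀ * L := by
    intro r hr
    rw [hphi_eq, div_mul_eq_mul_div, div_le_iff₀ (lt_of_lt_of_le hL (le_max_left L r))]
    calc ε₀ * L * r ≤ ε₀ * L * max L r := by
          apply mul_le_mul_of_nonneg_left (le_max_right _ _) (by positivity)
      _ = ε₀ * L * max L r := rfl
  have hphic : Continuous (fun x : E2 => phi ε₀ L ‖x‖) := by
    have h : (fun x : E2 => phi ε₀ L ‖x‖) = fun x => ε₀ * L / max L ‖x‖ :=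
      funext (fun x => hphi_eq ‖x‖)
    rw [h]
    exact continuous_const.div (continuous_const.max continuous_norm)
      (fun x => ne_of_gt (lt_of_lt_of_le hL (le_max_left _ _)))
  -- v = u t facts
  have hvCD : ContDiff ℝ (⊤ : ℕ∞) (u t) := by
    have h : u t = (fun p : ℝ × E2 => u p.1 p.2) ∘ (fun x : E2 => (t, x)) := rfl
    rw [h]
    exact hu.comp (contDiff_const.prodMk contDiff_id)
  have hvc : Continuous (u t) := hvCD.continuous
  have hvsupp : ∀ x : E2, M < ‖x‖ → u t x = 0 := hfin t ht
  have hgc : Continuous (gradient (u t)) := continuous_gradient hvCD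
  have hgsupp : ∀ x : E2, M < ‖x‖ → gradient (u t) x = 0 :=
    fun x hx => gradient_vanish_far hvsupp hx
  -- u_t facts
  have hut_eq : ∀ x : E2, dt u t x
      = fderiv ℝ (fun p : ℝ × E2 => u p.1 p.2) (t, x) ((1:ℝ), (0:E2)) := by
    intro x
    have hline : HasDerivAt (fun s : ℝ => (s, x)) ((1:ℝ), (0:E2)) t :=
      (hasDerivAt_id t).prodMk (hasDerivAt_const t x)
    have hF : HasFDerivAt (fun p : ℝ × E2 => u p.1 p.2)
        (fderiv ℝ (fun p : ℝ × E2 => u p.1 p.2) (t, x)) (t, x) :=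
      (hu.differentiable (by simp) _).hasFDerivAt
    exact (hF.comp_hasDerivAt t hline).deriv
  have hutc : Continuous (fun x => dt u t x) := by
    have h : (fun x => dt u t x)
        = fun x : E2 => fderiv ℝ (fun p : ℝ × E2 => u p.1 p.2) (t, x) ((1:ℝ), (0:E2)) :=
      funext hut_eq
    rw [h]
    exact ((hu.continuous_fderiv (by simp)).comp (Continuous.prodMk_right t)).clm_apply continuous_const
  have hutsupp : ∀ x : E2, M < ‖x‖ → dt u t x = 0 := by
    intro x hx
    rcases eq_or_lt_of_le ht with h0 | hpos
    · have hxR : R < ‖x‖ := by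
        simp only [hMdef, ← h0] at hx
        linarith
      rw [← h0, hic1 x]
      by_contra hne
      have := hsupp₁ (Function.mem_support.2 hne)
      rw [Metric.mem_closedBall, dist_zero_right] at this
      linarith
    · have hδ : 0 < min t ((‖x‖ - M)/2) := by
        apply lt_min hpos
        simp only [hMdef] at hx ⊢
        linarith
      have hev : (fun s => u s x) =ᶠ[nhds t] (fun _ => (0:ℝ)) := by
        have hmem : Set.Ioo (t - min t ((‖x‖ - M)/2)) (t + min t ((‖x‖ - M)/2)) ∈ nhds t :=
          Ioo_mem_nhds (by linarith) (by linarith)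
        filter_upwards [hmem] with s hs
        apply hfin s (by linarith [hs.1, min_le_left t ((‖x‖ - M)/2)])
        have h1 : s < t + (‖x‖ - M)/2 := lt_of_lt_of_le hs.2 (by
          have := min_le_right t ((‖x‖ - M)/2); linarith)
        simp only [hMdef] at hx ⊢
        linarith
      rw [dt, hev.deriv_eq, deriv_const]
  -- integrability of all relevant integrands
  have hint1 : Integrable (fun x : E2 =>
      dt u t x * phi ε₀ L ‖x‖ * (inner ℝ x (gradient (u t) x) : ℝ)) := by
    apply integrable_of_vanish _ ((hutc.mul hphic).mul (continuous_id.inner hgc)) M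
    intro x hx
    simp only [Pi.mul_apply, Pi.pow_apply]
    rw [hutsupp x hx]
    ring
  have hint2 : Integrable (fun x : E2 => dt u t x * u t x) := by
    apply integrable_of_vanish _ (hutc.mul hvc) M
    intro x hx
    simp only [Pi.mul_apply, Pi.pow_apply]
    rw [hutsupp x hx]
    ring
  have hint3 : Integrable (fun x : E2 => a x * (u t x) ^ 2) := by
    apply integrable_of_vanish _ (ha.continuous.mul (hvc.pow 2)) M
    intro x hx
    simp only [Pi.mul_apply, Pi.pow_apply]
    rw [hvsupp x hx]
    ring
  have hintP : Integrable (fun x : E2 => (dt u t x) ^ 2) := by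
    apply integrable_of_vanish _ (hutc.pow 2) M
    intro x hx
    simp only [Pi.mul_apply, Pi.pow_apply]
    rw [hutsupp x hx]
    ring
  have hintQ : Integrable (fun x : E2 => ‖gradient (u t) x‖ ^ 2) := by
    apply integrable_of_vanish _ ((hgc.norm).pow 2) M
    intro x hx
    simp only [Pi.mul_apply, Pi.pow_apply]
    rw [hgsupp x hx]
    simp
  have hintS : Integrable (fun x : E2 => (u t x) ^ 2) := by
    apply integrable_of_vanish _ (hvc.pow 2) M
    intro x hx
    simp only [Pi.mul_apply, Pi.pow_apply]
    rw [hvsupp x hx]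
    ring
  have hint4 : Integrable (fun x : E2 => (dt u t x) ^ 2 + ‖gradient (u t) x‖ ^ 2) :=
    hintP.add hintQ
  -- names for the basic integrals
  set P := ∫ x : E2, (dt u t x) ^ 2 with hPdef
  set Q := ∫ x : E2, ‖gradient (u t) x‖ ^ 2 with hQdef
  set A := ∫ x : E2, a x * (u t x) ^ 2 with hAdef
  set S := ∫ x : E2, (u t x) ^ 2 with hSdef
  set V := ∫ x in Metric.closedBall (0:E2) L, (u t x) ^ 2 with hVdef
  set W := ∫ x in {y : E2 | L < ‖y‖}, (u t x) ^ 2 with hWdef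
  have hP0 : 0 ≤ P := integral_nonneg (fun x => sq_nonneg _)
  have hQ0 : 0 ≤ Q := integral_nonneg (fun x => sq_nonneg _)
  have hW0 : 0 ≤ W := setIntegral_nonneg
    ((isOpen_lt continuous_const continuous_norm).measurableSet) (fun x _ => sq_nonneg _)
  -- the splitting S = V + W
  have hcompl : (Metric.closedBall (0:E2) L)ᶜ = {y : E2 | L < ‖y‖} := by
    ext y
    simp [Metric.mem_closedBall, dist_zero_right, not_le]
  have hsplit : V + W = S := by
    rw [hVdef, hWdef, hSdef, ← hcompl]
    exact integral_add_compl measurableSet_closedBall hintS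
  -- Poincare
  have hpoin : V ≤ W + 16*L^2 * Q :=
    poincare L hL (u t) hvCD M hM hvsupp
  -- lower bound for A
  have hAW : ε₀ * W ≤ A := by
    have h1 : ∫ x in {y : E2 | L < ‖y‖}, ε₀ * (u t x) ^ 2
        ≤ ∫ x in {y : E2 | L < ‖y‖}, a x * (u t x) ^ 2 := by
      apply setIntegral_mono_on ((hintS.const_mul ε₀).integrableOn) (hint3.integrableOn)
        ((isOpen_lt continuous_const continuous_norm).measurableSet)
      intro x hx
      exact mul_le_mul_of_nonneg_right (haL x hx) (sq_nonneg _)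
    have h2 : ∫ x in {y : E2 | L < ‖y‖}, a x * (u t x) ^ 2 ≤ A := by
      apply setIntegral_le_integral hint3
      filter_upwards with x using mul_nonneg (ha0 x) (sq_nonneg _)
    calc ε₀ * W = ∫ x in {y : E2 | L < ‖y‖}, ε₀ * (u t x) ^ 2 := by
          rw [hWdef, integral_const_mul]
      _ ≤ ∫ x in {y : E2 | L < ‖y‖}, a x * (u t x) ^ 2 := h1
      _ ≤ A := h2
  -- pointwise lower bounds
  have hA1 : ∀ x : E2, -(ε₀*L/2 * ((dt u t x)^2 + ‖gradient (u t) x‖^2))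
      ≤ dt u t x * phi ε₀ L ‖x‖ * (inner ℝ x (gradient (u t) x) : ℝ) := by
    intro x
    have h1 : |(inner ℝ x (gradient (u t) x) : ℝ)| ≤ ‖x‖ * ‖gradient (u t) x‖ :=
      abs_real_inner_le_norm x _
    have h2 : 0 ≤ phi ε₀ L ‖x‖ := hphi_nonneg _
    have h3 : phi ε₀ L ‖x‖ * ‖x‖ ≤ ε₀ * L := hphi_mul _ (norm_nonneg x)
    have h4 : |dt u t x * phi ε₀ L ‖x‖ * (inner ℝ x (gradient (u t) x) : ℝ)|
        ≤ ε₀ * L * (|dt u t x| * ‖gradient (u t) x‖) := by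
      rw [abs_mul, abs_mul, abs_of_nonneg h2]
      calc |dt u t x| * phi ε₀ L ‖x‖ * |(inner ℝ x (gradient (u t) x) : ℝ)|
          ≤ |dt u t x| * phi ε₀ L ‖x‖ * (‖x‖ * ‖gradient (u t) x‖) := by
            apply mul_le_mul_of_nonneg_left h1 (by positivity)
        _ = (phi ε₀ L ‖x‖ * ‖x‖) * (|dt u t x| * ‖gradient (u t) x‖) := by ring
        _ ≤ ε₀ * L * (|dt u t x| * ‖gradient (u t) x‖) :=
            mul_le_mul_of_nonneg_right h3 (by positivity)
    have h5 := neg_abs_le (dt u t x * phi ε₀ L ‖x‖ * (inner ℝ x (gradient (u t) x) : ℝ))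
    have h6 : 0 ≤ ε₀ * L := by positivity
    nlinarith [sq_nonneg (|dt u t x| - ‖gradient (u t) x‖), sq_abs (dt u t x),
      abs_nonneg (dt u t x), norm_nonneg (gradient (u t) x)]
  have hA2 : ∀ x : E2, -((3/4) * (dt u t x)^2 + (3/16)*ε₀^2*(u t x)^2)
      ≤ (3/4)*ε₀ * (dt u t x * u t x) := by
    intro x
    nlinarith [sq_nonneg (ε₀ * u t x + 2 * dt u t x), sq_nonneg (dt u t x), hε₀.le]
  -- combine into an integrand comparison
  have hFH : ∀ x : E2,
      (k/2 - ε₀*L/2 - 3/4) * (dt u t x)^2 + ((k/2 - ε₀*L/2) * ‖gradient (u t) x‖^2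
        + ((3/4)*ε₀/2 * (a x * (u t x)^2) + (-((3/16)*ε₀^2)) * (u t x)^2))
      ≤ dt u t x * phi ε₀ L ‖x‖ * (inner ℝ x (gradient (u t) x) : ℝ)
        + ((3/4)*ε₀ * (dt u t x * u t x) + ((3/4)*ε₀/2 * (a x * (u t x)^2)
        + k/2 * ((dt u t x)^2 + ‖gradient (u t) x‖^2))) := by
    intro x
    have := hA1 x
    have := hA2 x
    linarith
  have hi2c : Integrable (fun x : E2 => (3/4)*ε₀ * (dt u t x * u t x)) :=
    hint2.const_mul _
  have hi3c : Integrable (fun x : E2 => (3/4)*ε₀/2 * (a x * (u t x)^2)) :=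
    hint3.const_mul _
  have hi4c : Integrable (fun x : E2 => k/2 * ((dt u t x)^2 + ‖gradient (u t) x‖^2)) :=
    hint4.const_mul _
  have hi34 : Integrable (fun x : E2 => (3/4)*ε₀/2 * (a x * (u t x)^2)
      + k/2 * ((dt u t x)^2 + ‖gradient (u t) x‖^2)) := hi3c.add hi4c
  have hi234 : Integrable (fun x : E2 => (3/4)*ε₀ * (dt u t x * u t x)
      + ((3/4)*ε₀/2 * (a x * (u t x)^2)
      + k/2 * ((dt u t x)^2 + ‖gradient (u t) x‖^2))) := hi2c.add hi34
  have hintF : Integrable (fun x : E2 =>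
      dt u t x * phi ε₀ L ‖x‖ * (inner ℝ x (gradient (u t) x) : ℝ)
        + ((3/4)*ε₀ * (dt u t x * u t x) + ((3/4)*ε₀/2 * (a x * (u t x)^2)
        + k/2 * ((dt u t x)^2 + ‖gradient (u t) x‖^2)))) := hint1.add hi234
  have hjPc : Integrable (fun x : E2 => (k/2 - ε₀*L/2 - 3/4) * (dt u t x)^2) :=
    hintP.const_mul _
  have hjQc : Integrable (fun x : E2 => (k/2 - ε₀*L/2) * ‖gradient (u t) x‖^2) :=
    hintQ.const_mul _
  have hjSc : Integrable (fun x : E2 => (-((3/16)*ε₀^2)) * (u t x)^2) :=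
    hintS.const_mul _
  have hj34 : Integrable (fun x : E2 => (3/4)*ε₀/2 * (a x * (u t x)^2)
      + (-((3/16)*ε₀^2)) * (u t x)^2) := hi3c.add hjSc
  have hj234 : Integrable (fun x : E2 => (k/2 - ε₀*L/2) * ‖gradient (u t) x‖^2
      + ((3/4)*ε₀/2 * (a x * (u t x)^2) + (-((3/16)*ε₀^2)) * (u t x)^2)) := hjQc.add hj34
  have hintH : Integrable (fun x : E2 =>
      (k/2 - ε₀*L/2 - 3/4) * (dt u t x)^2 + ((k/2 - ε₀*L/2) * ‖gradient (u t) x‖^2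
        + ((3/4)*ε₀/2 * (a x * (u t x)^2) + (-((3/16)*ε₀^2)) * (u t x)^2))) :=
    hjPc.add hj234
  have hGeq : Gfun ε₀ L a u k t = ∫ x : E2,
      (dt u t x * phi ε₀ L ‖x‖ * (inner ℝ x (gradient (u t) x) : ℝ)
        + ((3/4)*ε₀ * (dt u t x * u t x) + ((3/4)*ε₀/2 * (a x * (u t x)^2)
        + k/2 * ((dt u t x)^2 + ‖gradient (u t) x‖^2)))) := by
    rw [Gfun, energy,
      integral_add hint1 hi234,
      integral_add hi2c hi34,
      integral_add hi3c hi4c,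
      integral_const_mul, integral_const_mul, integral_const_mul]
    ring
  have hHeq : (∫ x : E2,
      ((k/2 - ε₀*L/2 - 3/4) * (dt u t x)^2 + ((k/2 - ε₀*L/2) * ‖gradient (u t) x‖^2
        + ((3/4)*ε₀/2 * (a x * (u t x)^2) + (-((3/16)*ε₀^2)) * (u t x)^2))))
      = (k/2 - ε₀*L/2 - 3/4) * P + ((k/2 - ε₀*L/2) * Q
        + ((3/4)*ε₀/2 * A + (-((3/16)*ε₀^2)) * S)) := by
    rw [integral_add hjPc hj234,
      integral_add hjQc hj34,
      integral_add hi3c hjSc,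
      integral_const_mul, integral_const_mul, integral_const_mul, integral_const_mul]
  have hGH : (k/2 - ε₀*L/2 - 3/4) * P + ((k/2 - ε₀*L/2) * Q
      + ((3/4)*ε₀/2 * A + (-((3/16)*ε₀^2)) * S)) ≤ Gfun ε₀ L a u k t := by
    rw [hGeq, ← hHeq]
    exact integral_mono hintH hintF hFH
  -- final arithmetic
  have hkL : ε₀*L + 3/2 ≤ k := by nlinarith [mul_pos (mul_pos hε₀ hε₀) (mul_pos hL hL)]
  have hc1 : 0 ≤ k/2 - ε₀*L/2 - 3/4 := by linarith
  have hc2 : 3*ε₀^2*L^2 ≤ k/2 - ε₀*L/2 := by nlinarith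
  have t1 : 0 ≤ (k/2 - ε₀*L/2 - 3/4) * P := mul_nonneg hc1 hP0
  have t2 : 0 ≤ (k/2 - ε₀*L/2 - 3*ε₀^2*L^2) * Q := mul_nonneg (by linarith) hQ0
  have t3 : (3/16)*ε₀^2*V ≤ (3/16)*ε₀^2*(W + 16*L^2*Q) :=
    mul_le_mul_of_nonneg_left hpoin (by positivity)
  have t4 : (3/8)*ε₀^2*W ≤ (3/4)*ε₀/2 * A := by
    calc (3/8)*ε₀^2*W = (3/4)*ε₀/2 * (ε₀ * W) := by ring
      _ ≤ (3/4)*ε₀/2 * A := mul_le_mul_of_nonneg_left hAW (by positivity)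
  nlinarith [hGH, hsplit, t1, t2, t3, t4]
end
end

section
/- (Weighted space–time identity) For every t ≥ 0, ((1+t)/2) ∫_{ℝ²} a(x)|u(t,x)|² dx + (1/2)‖u₀‖_{L²}² + ∫₀ᵗ (1+s) ‖∇u(s,·)‖_{L²}² ds = K₀ − (1+t) ∫_{ℝ²} u_t(t,x) u(t,x) dx + (1/2)‖u(t,·)‖_{L²}² + ∫₀ᵗ (1+s) ‖u_s(s,·)‖_{L²}² ds + (1/2) ∫₀ᵗ ∫_{ℝ²} a(x)|u(s,x)|² dx ds, where K₀ = ∫_{ℝ²} u₀(x)u₁(x) dx + (1/2) ∫_{ℝ²} a(x)|u₀(x)|² dx. -/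
open MeasureTheory Real

noncomputable section

open Metric

lemma e2_hcs {f : E2 → ℝ} {r : ℝ} (h : ∀ x : E2, r < ‖x‖ → f x = 0) :
    HasCompactSupport f := by
  apply HasCompactSupport.intro (isCompact_closedBall (0:E2) r)
  intro x hx
  apply h
  by_contra hc
  exact hx (by simpa [mem_closedBall, dist_zero_right] using not_lt.1 hc)

lemma e2_integrable {f : E2 → ℝ} (hf : Continuous f) {r : ℝ}
    (h : ∀ x : E2, r < ‖x‖ → f x = 0) : Integrable f := by
  exact hf.integrable_of_hasCompactSupport (e2_hcs h)

lemma norm_grad_sq (f : E2 → ℝ) (x : E2) :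
    ‖gradient f x‖ * ‖gradient f x‖ =
      ∑ i : Fin 2, (fderiv ℝ f x (EuclideanSpace.single i 1)) *
        (fderiv ℝ f x (EuclideanSpace.single i 1)) := by
  have hco : ∀ i : Fin 2, (gradient f x) i = fderiv ℝ f x (EuclideanSpace.single i 1) := by
    intro i
    have h1 : (inner ℝ (gradient f x) (EuclideanSpace.single i (1:ℝ)) : ℝ)
        = fderiv ℝ f x (EuclideanSpace.single i 1) :=
      InnerProductSpace.toDual_symm_apply
    rw [real_inner_comm, EuclideanSpace.inner_single_left] at h1
    simpa using h1
  have h2 : (inner ℝ (gradient f x) (gradient f x) : ℝ) = ‖gradient f x‖ * ‖gradient f x‖ := by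
    rw [real_inner_self_eq_norm_sq]; ring
  rw [← h2, PiLp.inner_apply]
  refine Finset.sum_congr rfl fun i _ => ?_
  rw [hco i]
  simp [RCLike.inner_apply, pow_two]

lemma contOn_param {F : ℝ → E2 → ℝ} {S : Set ℝ} {r : ℝ}
    (hF : Continuous fun p : ℝ × E2 => F p.1 p.2)
    (hz : ∀ s ∈ S, ∀ x : E2, r < ‖x‖ → F s x = 0) :
    ContinuousOn (fun s => ∫ x : E2, F s x) S := by
  apply continuousOn_integral_of_compact_support (isCompact_closedBall (0:E2) r)
    (hF.continuousOn)
  intro s x hs hx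
  refine hz s hs x ?_
  by_contra hc
  exact hx (by simpa [mem_closedBall, dist_zero_right] using not_lt.1 hc)

lemma hasDerivAt_param {F F' : ℝ → E2 → ℝ} {s₀ ε r : ℝ} (hε : 0 < ε)
    (hF : Continuous fun p : ℝ × E2 => F p.1 p.2)
    (hF' : Continuous fun p : ℝ × E2 => F' p.1 p.2)
    (hz : ∀ s ∈ ball s₀ ε, ∀ x : E2, r < ‖x‖ → F' s x = 0)
    (hz0 : ∀ x : E2, r < ‖x‖ → F s₀ x = 0)
    (hd : ∀ x : E2, ∀ s ∈ ball s₀ ε, HasDerivAt (fun τ => F τ x) (F' s x) s) :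
    HasDerivAt (fun s => ∫ x : E2, F s x) (∫ x : E2, F' s₀ x) s₀ := by
  have hcF : ∀ s, Continuous (F s) := fun s =>
    hF.comp (continuous_const.prodMk continuous_id)
  have hcF' : ∀ s, Continuous (F' s) := fun s =>
    hF'.comp (continuous_const.prodMk continuous_id)
  obtain ⟨M, hM⟩ := ((isCompact_closedBall s₀ (ε/2)).prod
      (isCompact_closedBall (0:E2) r)).exists_bound_of_continuousOn hF'.continuousOn
  have key := hasDerivAt_integral_of_dominated_loc_of_deriv_le (μ := volume)
    (F := F) (F' := F') (x₀ := s₀)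
    (bound := (closedBall (0:E2) r).indicator (fun _ => M)) (ball_mem_nhds s₀ (half_pos hε))
    (Filter.Eventually.of_forall fun s => (hcF s).aestronglyMeasurable)
    (e2_integrable (hcF s₀) hz0)
    ((hcF' s₀).aestronglyMeasurable)
    ?_ ?_ ?_
  · exact key.2
  · refine Filter.Eventually.of_forall fun x => fun s hs => ?_
    by_cases hx : x ∈ closedBall (0:E2) r
    · rw [Set.indicator_of_mem hx]
      exact hM (s, x) ⟨(by simpa [mem_closedBall] using (le_of_lt (by
          simpa [mem_ball] using hs)).trans (le_refl (ε/2))), hx⟩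
    · have hrx : r < ‖x‖ := by
        by_contra hc
        exact hx (by simpa [mem_closedBall, dist_zero_right] using not_lt.1 hc)
      rw [Set.indicator_of_notMem hx, hz s (ball_subset_ball (by linarith) hs) x hrx]
      simp
  · rw [integrable_indicator_iff measurableSet_closedBall]
    exact integrableOn_const measure_closedBall_lt_top.ne
  · exact Filter.Eventually.of_forall fun x => fun s hs =>
      hd x s (ball_subset_ball (by linarith) hs)


noncomputable def Vf (u : ℝ → E2 → ℝ) : ℝ × E2 → ℝ :=
  fun p => fderiv ℝ (fun q : ℝ × E2 => u q.1 q.2) p (1, 0)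

/-- u_tt as a function on ℝ × E2. -/
noncomputable def Wf (u : ℝ → E2 → ℝ) : ℝ × E2 → ℝ :=
  fun p => fderiv ℝ (Vf u) p (1, 0)

/-- i-th spatial partial derivative. -/
noncomputable def Pf (u : ℝ → E2 → ℝ) (i : Fin 2) : ℝ × E2 → ℝ :=
  fun p => fderiv ℝ (fun q : ℝ × E2 => u q.1 q.2) p (0, EuclideanSpace.single i 1)

/-- second i-th spatial partial derivative. -/
noncomputable def Qf (u : ℝ → E2 → ℝ) (i : Fin 2) : ℝ × E2 → ℝ :=
  fun p => fderiv ℝ (Pf u i) p (0, EuclideanSpace.single i 1)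

variable {u : ℝ → E2 → ℝ}

section
variable (hu : ContDiff ℝ (⊤ : ℕ∞) (fun p : ℝ × E2 => u p.1 p.2))
include hu

lemma contDiff_Vf : ContDiff ℝ (⊤ : ℕ∞) (Vf u) :=
  ((hu.fderiv_right ((by simp))).clm_apply contDiff_const)

lemma contDiff_Pf (i : Fin 2) : ContDiff ℝ (⊤ : ℕ∞) (Pf u i) :=
  ((hu.fderiv_right ((by simp))).clm_apply contDiff_const)

lemma contDiff_Wf : ContDiff ℝ (⊤ : ℕ∞) (Wf u) :=
  (((contDiff_Vf hu).fderiv_right (m := (⊤ : ℕ∞)) ((by simp))).clm_apply contDiff_const)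

lemma continuous_Wf : Continuous (Wf u) := (contDiff_Wf hu).continuous

lemma contDiff_Qf (i : Fin 2) : ContDiff ℝ (⊤ : ℕ∞) (Qf u i) :=
  (((contDiff_Pf hu i).fderiv_right (m := (⊤ : ℕ∞)) ((by simp))).clm_apply contDiff_const)

lemma continuous_Qf (i : Fin 2) : Continuous (Qf u i) := (contDiff_Qf hu i).continuous

lemma hasDerivAt_Vf (s : ℝ) (x : E2) :
    HasDerivAt (fun τ => u τ x) (Vf u (s, x)) s := by
  have h1 : HasFDerivAt (fun q : ℝ × E2 => u q.1 q.2)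
      (fderiv ℝ (fun q : ℝ × E2 => u q.1 q.2) (s, x)) (s, x) :=
    (hu.differentiable (by simp) _).hasFDerivAt
  have h2 : HasDerivAt (fun τ : ℝ => (τ, x)) ((1 : ℝ), (0 : E2)) s :=
    (hasDerivAt_id s).prodMk (hasDerivAt_const s x)
  exact h1.comp_hasDerivAt s h2

lemma dt_eq_Vf (s : ℝ) (x : E2) : dt u s x = Vf u (s, x) :=
  (hasDerivAt_Vf hu s x).deriv

lemma hasDerivAt_Wf (s : ℝ) (x : E2) :
    HasDerivAt (fun τ => Vf u (τ, x)) (Wf u (s, x)) s := by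
  have h1 : HasFDerivAt (Vf u) (fderiv ℝ (Vf u) (s, x)) (s, x) :=
    ((contDiff_Vf hu).differentiable (by simp) _).hasFDerivAt
  have h2 : HasDerivAt (fun τ : ℝ => (τ, x)) ((1 : ℝ), (0 : E2)) s :=
    (hasDerivAt_id s).prodMk (hasDerivAt_const s x)
  exact h1.comp_hasDerivAt s h2

lemma deriv_dt_eq_Wf (s : ℝ) (x : E2) :
    deriv (fun τ => dt u τ x) s = Wf u (s, x) := by
  have : (fun τ => dt u τ x) = fun τ => Vf u (τ, x) := by
    funext τ; exact dt_eq_Vf hu τ x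
  rw [this]
  exact (hasDerivAt_Wf hu s x).deriv

lemma hasFDerivAt_section (s : ℝ) (x : E2) :
    HasFDerivAt (u s)
      ((fderiv ℝ (fun q : ℝ × E2 => u q.1 q.2) (s, x)).comp
        (((0 : E2 →L[ℝ] ℝ)).prod (ContinuousLinearMap.id ℝ E2))) x := by
  have h1 : HasFDerivAt (fun q : ℝ × E2 => u q.1 q.2)
      (fderiv ℝ (fun q : ℝ × E2 => u q.1 q.2) (s, x)) (s, x) :=
    (hu.differentiable (by simp) _).hasFDerivAt
  have h2 : HasFDerivAt (fun y : E2 => ((s : ℝ), y))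
      (((0 : E2 →L[ℝ] ℝ)).prod (ContinuousLinearMap.id ℝ E2)) x :=
    (hasFDerivAt_const s x).prodMk (hasFDerivAt_id x)
  exact h1.comp x h2

lemma fderiv_section_eq (s : ℝ) (x : E2) (i : Fin 2) :
    fderiv ℝ (u s) x (EuclideanSpace.single i 1) = Pf u i (s, x) := by
  rw [(hasFDerivAt_section hu s x).fderiv]
  simp [Pf]

lemma grad_sq_eq (s : ℝ) (x : E2) :
    ‖gradient (u s) x‖ * ‖gradient (u s) x‖ =
      ∑ i : Fin 2, Pf u i (s, x) * Pf u i (s, x) := by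
  rw [norm_grad_sq]
  exact Finset.sum_congr rfl fun i _ => by rw [fderiv_section_eq hu s x i]

lemma fderiv_Pf_section (s : ℝ) (x : E2) (i : Fin 2) :
    fderiv ℝ (fun y => Pf u i (s, y)) x (EuclideanSpace.single i 1) = Qf u i (s, x) := by
  have h1 : HasFDerivAt (Pf u i) (fderiv ℝ (Pf u i) (s, x)) (s, x) :=
    ((contDiff_Pf hu i).differentiable (by simp) _).hasFDerivAt
  have h2 : HasFDerivAt (fun y : E2 => ((s : ℝ), y))
      (((0 : E2 →L[ℝ] ℝ)).prod (ContinuousLinearMap.id ℝ E2)) x :=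
    (hasFDerivAt_const s x).prodMk (hasFDerivAt_id x)
  have h3 : HasFDerivAt (fun y => Pf u i (s, y))
      ((fderiv ℝ (Pf u i) (s, x)).comp
        (((0 : E2 →L[ℝ] ℝ)).prod (ContinuousLinearMap.id ℝ E2))) x := h1.comp x h2
  rw [h3.fderiv]
  simp [Qf]

lemma fderiv_P_section_eq (s : ℝ) (x : E2) (i : Fin 2) :
    fderiv ℝ (fun y => fderiv ℝ (u s) y (EuclideanSpace.single i 1)) x
      (EuclideanSpace.single i 1) = Qf u i (s, x) := by
  have heq : (fun y => (fderiv ℝ (u s) y) (EuclideanSpace.single i 1))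
      = fun y => Pf u i (s, y) := by
    funext y; exact fderiv_section_eq hu s y i
  rw [heq]
  exact fderiv_Pf_section hu s x i

lemma lap_eq (s : ℝ) (x : E2) :
    lap (u s) x = ∑ i : Fin 2, Qf u i (s, x) :=
  Finset.sum_congr rfl fun i _ => fderiv_P_section_eq hu s x i

end

lemma contDiff_section (hu : ContDiff ℝ (⊤ : ℕ∞) (fun p : ℝ × E2 => u p.1 p.2)) (s : ℝ) :
    ContDiff ℝ (⊤ : ℕ∞) (u s) :=
  hu.comp (contDiff_const.prodMk contDiff_id)

lemma Pf_zero_of_u_zero (hu : ContDiff ℝ (⊤ : ℕ∞) (fun p : ℝ × E2 => u p.1 p.2)) {s r : ℝ}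
    (hzu : ∀ y : E2, r < ‖y‖ → u s y = 0) (i : Fin 2) :
    ∀ y : E2, r < ‖y‖ → Pf u i (s, y) = 0 := by
  intro y hy
  rw [← fderiv_section_eq hu s y i]
  have hopen : IsOpen {z : E2 | r < ‖z‖} := isOpen_lt continuous_const continuous_norm
  have hev : u s =ᶠ[nhds y] fun _ => 0 :=
    Filter.eventually_of_mem (hopen.mem_nhds hy) (fun z hz => hzu z hz)
  rw [Filter.EventuallyEq.fderiv_eq hev, fderiv_fun_const]
  simp

lemma ibp (hu : ContDiff ℝ (⊤ : ℕ∞) (fun p : ℝ × E2 => u p.1 p.2)) (s r : ℝ)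
    (hzu : ∀ y : E2, r < ‖y‖ → u s y = 0) :
    ∫ x : E2, (∑ i : Fin 2, Qf u i (s, x)) * u s x
      = - ∫ x : E2, ∑ i : Fin 2, Pf u i (s, x) * Pf u i (s, x) := by
  have hus : ContDiff ℝ (⊤ : ℕ∞) (u s) := contDiff_section hu s
  have hPzero := Pf_zero_of_u_zero hu hzu
  have husP : ∀ i : Fin 2, ContDiff ℝ (⊤ : ℕ∞) (fun y => Pf u i (s, y)) :=
    fun i => (contDiff_Pf hu i).comp (contDiff_const.prodMk contDiff_id)
  have hcsu : HasCompactSupport (u s) := e2_hcs hzu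
  have hcsP : ∀ i, HasCompactSupport (fun y => Pf u i (s, y)) := fun i => e2_hcs (hPzero i)
  have hcu : Continuous (u s) := hus.continuous
  have hcP : ∀ i, Continuous (fun y : E2 => Pf u i (s, y)) := fun i => (husP i).continuous
  have hcQ : ∀ i, Continuous (fun y : E2 => Qf u i (s, y)) :=
    fun i => (continuous_Qf hu i).comp (continuous_const.prodMk continuous_id)
  have hintQ : ∀ i : Fin 2, Integrable (fun x : E2 => Qf u i (s, x) * u s x) :=
    fun i => e2_integrable ((hcQ i).mul hcu) (fun x hx => by rw [hzu x hx, mul_zero])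
  have hintP : ∀ i : Fin 2, Integrable (fun x : E2 => Pf u i (s, x) * Pf u i (s, x)) :=
    fun i => e2_integrable ((hcP i).mul (hcP i)) (fun x hx => by rw [hPzero i x hx, mul_zero])
  have key : ∀ i : Fin 2, ∫ x : E2, Qf u i (s, x) * u s x
      = - ∫ x : E2, Pf u i (s, x) * Pf u i (s, x) := by
    intro i
    obtain ⟨C, hC⟩ := ContDiff.lipschitzWith_of_hasCompactSupport (hcsP i) (husP i) (by simp)
    obtain ⟨D, hD⟩ := ContDiff.lipschitzWith_of_hasCompactSupport hcsu hus (by simp)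
    have h := hC.integral_lineDeriv_mul_eq hD hcsu (EuclideanSpace.single i 1) (μ := volume)
    have e1 : (fun x : E2 => lineDeriv ℝ (fun y => Pf u i (s, y)) x
        (EuclideanSpace.single i 1) * u s x) = fun x : E2 => Qf u i (s, x) * u s x := by
      funext x
      rw [DifferentiableAt.lineDeriv_eq_fderiv (((husP i).differentiable (by simp)) x),
        fderiv_Pf_section hu s x i]
    have e2 : (fun x : E2 => lineDeriv ℝ (u s) x (-(EuclideanSpace.single i 1)) *
        Pf u i (s, x)) = fun x : E2 => -(Pf u i (s, x) * Pf u i (s, x)) := by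
      funext x
      rw [DifferentiableAt.lineDeriv_eq_fderiv ((hus.differentiable (by simp)) x), map_neg,
        fderiv_section_eq hu s x i]
      ring
    rw [show (∫ x : E2, lineDeriv ℝ (fun y => Pf u i (s, y)) x
        (EuclideanSpace.single i 1) * u s x) = ∫ x : E2, Qf u i (s, x) * u s x from by rw [e1]]
      at h
    rw [show (∫ x : E2, lineDeriv ℝ (u s) x (-(EuclideanSpace.single i 1)) *
        Pf u i (s, x)) = ∫ x : E2, -(Pf u i (s, x) * Pf u i (s, x)) from by rw [e2]] at h
    rw [h, integral_neg]
  have lhs1 : (∫ x : E2, (∑ i : Fin 2, Qf u i (s, x)) * u s x)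
      = ∑ i : Fin 2, ∫ x : E2, Qf u i (s, x) * u s x := by
    rw [show (fun x : E2 => (∑ i : Fin 2, Qf u i (s, x)) * u s x)
        = fun x : E2 => ∑ i : Fin 2, Qf u i (s, x) * u s x from by
      funext x; rw [Finset.sum_mul]]
    exact integral_finset_sum _ (fun i _ => hintQ i)
  have rhs1 : (∫ x : E2, ∑ i : Fin 2, Pf u i (s, x) * Pf u i (s, x))
      = ∑ i : Fin 2, ∫ x : E2, Pf u i (s, x) * Pf u i (s, x) :=
    integral_finset_sum _ (fun i _ => hintP i)
  rw [lhs1, rhs1, ← Finset.sum_neg_distrib]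
  exact Finset.sum_congr rfl fun i _ => key i

noncomputable def intA (a : E2 → ℝ) (u : ℝ → E2 → ℝ) (s : ℝ) : ℝ :=
  ∫ x : E2, a x * (u s x * u s x)
noncomputable def intB (u : ℝ → E2 → ℝ) (s : ℝ) : ℝ := ∫ x : E2, Vf u (s, x) * u s x
noncomputable def intC (u : ℝ → E2 → ℝ) (s : ℝ) : ℝ := ∫ x : E2, u s x * u s x
noncomputable def intD (u : ℝ → E2 → ℝ) (s : ℝ) : ℝ := ∫ x : E2, Vf u (s, x) * Vf u (s, x)
noncomputable def intG (u : ℝ → E2 → ℝ) (s : ℝ) : ℝ :=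
  ∫ x : E2, ∑ i : Fin 2, Pf u i (s, x) * Pf u i (s, x)

lemma main_core (R t : ℝ) (ht : 0 ≤ t) (a : E2 → ℝ) (ha : Continuous a)
    (u : ℝ → E2 → ℝ) (hu : ContDiff ℝ (⊤ : ℕ∞) (fun p : ℝ × E2 => u p.1 p.2))
    (hz : ∀ s : ℝ, 0 ≤ s → ∀ x : E2, R + s < ‖x‖ → u s x = 0)
    (hV0 : ∀ x : E2, R < ‖x‖ → Vf u (0, x) = 0)
    (hpde : ∀ s : ℝ, 0 < s → ∀ x : E2,
      Wf u (s, x) = (∑ i : Fin 2, Qf u i (s, x)) - a x * Vf u (s, x)) :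
    ((1 + t) / 2) * intA a u t + (1 / 2) * intC u 0 +
        (∫ s in (0 : ℝ)..t, (1 + s) * intG u s) =
      (intB u 0 + (1 / 2) * intA a u 0) - (1 + t) * intB u t + (1 / 2) * intC u t +
        (∫ s in (0 : ℝ)..t, (1 + s) * intD u s) +
        (1 / 2) * ∫ s in (0 : ℝ)..t, intA a u s := by
  classical
  set r : ℝ := R + t + 1 with hrdef
  -- continuity of building blocks
  have cU : Continuous (fun p : ℝ × E2 => u p.1 p.2) := hu.continuous
  have cV : Continuous (Vf u) := (contDiff_Vf hu).continuous
  have cW : Continuous (Wf u) := continuous_Wf hu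
  have cP : ∀ i : Fin 2, Continuous (Pf u i) := fun i => (contDiff_Pf hu i).continuous
  have cQ : ∀ i : Fin 2, Continuous (Qf u i) := fun i => (continuous_Qf hu i)
  -- zero facts
  have hzu : ∀ s : ℝ, 0 ≤ s → s < t + 1 → ∀ x : E2, r < ‖x‖ → u s x = 0 := by
    intro s hs hs' x hx
    exact hz s hs x (by simp only [hrdef] at hx; linarith)
  have hUO : ∀ p : ℝ × E2, 0 < p.1 → p.1 < t + 1 → r < ‖p.2‖ →
      (fun q : ℝ × E2 => u q.1 q.2) =ᶠ[nhds p] fun _ => 0 := by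
    intro p hp1 hp2 hp3
    have hopen : IsOpen {q : ℝ × E2 | 0 < q.1 ∧ q.1 < t + 1 ∧ r < ‖q.2‖} := by
      exact (isOpen_lt continuous_const continuous_fst).inter
        ((isOpen_lt continuous_fst continuous_const).inter
          (isOpen_lt continuous_const (continuous_norm.comp continuous_snd)))
    exact Filter.eventually_of_mem (hopen.mem_nhds ⟨hp1, hp2, hp3⟩)
      (fun q hq => hzu q.1 (le_of_lt hq.1) hq.2.1 q.2 hq.2.2)
  have hVO : ∀ p : ℝ × E2, 0 < p.1 → p.1 < t + 1 → r < ‖p.2‖ → Vf u p = 0 := by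
    intro p hp1 hp2 hp3
    show fderiv ℝ (fun q : ℝ × E2 => u q.1 q.2) p (1, 0) = 0
    rw [Filter.EventuallyEq.fderiv_eq (hUO p hp1 hp2 hp3), fderiv_fun_const]
    simp
  have hPO : ∀ (i : Fin 2) (p : ℝ × E2), 0 < p.1 → p.1 < t + 1 → r < ‖p.2‖ → Pf u i p = 0 := by
    intro i p hp1 hp2 hp3
    show fderiv ℝ (fun q : ℝ × E2 => u q.1 q.2) p (0, EuclideanSpace.single i 1) = 0
    rw [Filter.EventuallyEq.fderiv_eq (hUO p hp1 hp2 hp3), fderiv_fun_const]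
    simp
  have hVnhd : ∀ p : ℝ × E2, 0 < p.1 → p.1 < t + 1 → r < ‖p.2‖ →
      Vf u =ᶠ[nhds p] fun _ => 0 := by
    intro p hp1 hp2 hp3
    have hopen : IsOpen {q : ℝ × E2 | 0 < q.1 ∧ q.1 < t + 1 ∧ r < ‖q.2‖} := by
      exact (isOpen_lt continuous_const continuous_fst).inter
        ((isOpen_lt continuous_fst continuous_const).inter
          (isOpen_lt continuous_const (continuous_norm.comp continuous_snd)))
    exact Filter.eventually_of_mem (hopen.mem_nhds ⟨hp1, hp2, hp3⟩)
      (fun q hq => hVO q hq.1 hq.2.1 hq.2.2)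
  have hWO : ∀ p : ℝ × E2, 0 < p.1 → p.1 < t + 1 → r < ‖p.2‖ → Wf u p = 0 := by
    intro p hp1 hp2 hp3
    show fderiv ℝ (Vf u) p (1, 0) = 0
    rw [Filter.EventuallyEq.fderiv_eq (hVnhd p hp1 hp2 hp3), fderiv_fun_const]
    simp
  -- zero facts at s = 0
  have hzu0 : ∀ x : E2, r < ‖x‖ → u 0 x = 0 :=
    fun x hx => hzu 0 le_rfl (by linarith) x hx
  have hzV0 : ∀ x : E2, r < ‖x‖ → Vf u (0, x) = 0 :=
    fun x hx => hV0 x (by simp only [hrdef] at hx; linarith)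
  have hzP0 : ∀ (i : Fin 2) (x : E2), r < ‖x‖ → Pf u i (0, x) = 0 :=
    fun i x hx => Pf_zero_of_u_zero hu hzu0 i x hx
  -- zero facts on Icc 0 t
  have zIu : ∀ s ∈ Set.Icc (0:ℝ) t, ∀ x : E2, r < ‖x‖ → u s x = 0 :=
    fun s hs x hx => hzu s hs.1 (by linarith [hs.2]) x hx
  have zIV : ∀ s ∈ Set.Icc (0:ℝ) t, ∀ x : E2, r < ‖x‖ → Vf u (s, x) = 0 := by
    intro s hs x hx
    rcases eq_or_lt_of_le hs.1 with h | h
    · rw [← h]; exact hzV0 x hx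
    · exact hVO (s, x) h (by simpa using by linarith [hs.2]) hx
  have zIP : ∀ (i : Fin 2), ∀ s ∈ Set.Icc (0:ℝ) t, ∀ x : E2, r < ‖x‖ → Pf u i (s, x) = 0 := by
    intro i s hs x hx
    rcases eq_or_lt_of_le hs.1 with h | h
    · rw [← h]; exact hzP0 i x hx
    · exact hPO i (s, x) h (by simpa using by linarith [hs.2]) hx
  -- continuity of the integral functions on Icc 0 t
  have contA : ContinuousOn (intA a u) (Set.Icc 0 t) := by
    refine contOn_param (F := fun s x => a x * (u s x * u s x)) (r := r) ?_ ?_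
    · exact (ha.comp continuous_snd).mul (cU.mul cU)
    · intro s hs x hx; show a x * (u s x * u s x) = 0; rw [zIu s hs x hx]; ring
  have contB : ContinuousOn (intB u) (Set.Icc 0 t) := by
    refine contOn_param (F := fun s x => Vf u (s, x) * u s x) (r := r) ?_ ?_
    · exact cV.mul cU
    · intro s hs x hx; show Vf u (s, x) * u s x = 0; rw [zIu s hs x hx]; ring
  have contC : ContinuousOn (intC u) (Set.Icc 0 t) := by
    refine contOn_param (F := fun s x => u s x * u s x) (r := r) ?_ ?_
    · exact cU.mul cU
    · intro s hs x hx; show u s x * u s x = 0; rw [zIu s hs x hx]; ring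
  have contD : ContinuousOn (intD u) (Set.Icc 0 t) := by
    refine contOn_param (F := fun s x => Vf u (s, x) * Vf u (s, x)) (r := r) ?_ ?_
    · exact cV.mul cV
    · intro s hs x hx; show Vf u (s, x) * Vf u (s, x) = 0; rw [zIV s hs x hx]; ring
  have contG : ContinuousOn (intG u) (Set.Icc 0 t) := by
    refine contOn_param (F := fun s x => ∑ i : Fin 2, Pf u i (s, x) * Pf u i (s, x)) (r := r)
      ?_ ?_
    · exact continuous_finset_sum _ (fun i _ => (cP i).mul (cP i))
    · intro s hs x hx
      show (∑ i : Fin 2, Pf u i (s, x) * Pf u i (s, x)) = 0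
      exact Finset.sum_eq_zero fun i _ => by rw [zIP i s hs x hx]; ring
  -- section continuity in x at fixed time
  have cSect : ∀ s₀ : ℝ, Continuous (u s₀) :=
    fun s₀ => cU.comp (continuous_const.prodMk continuous_id)
  have cSectV : ∀ s₀ : ℝ, Continuous (fun x : E2 => Vf u (s₀, x)) :=
    fun s₀ => cV.comp (continuous_const.prodMk continuous_id)
  have cSectW : ∀ s₀ : ℝ, Continuous (fun x : E2 => Wf u (s₀, x)) :=
    fun s₀ => cW.comp (continuous_const.prodMk continuous_id)
  have cSectQ : ∀ (i : Fin 2) (s₀ : ℝ), Continuous (fun x : E2 => Qf u i (s₀, x)) :=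
    fun i s₀ => (cQ i).comp (continuous_const.prodMk continuous_id)
  -- derivative of H at interior points
  have hH : ∀ s₀ ∈ Set.Ioo (0:ℝ) t,
      HasDerivAt (fun s => ((1 + s) / 2) * intA a u s + (1 + s) * intB u s -
          (1 / 2) * intC u s)
        ((1 / 2) * intA a u s₀ + ((1 + s₀) * intD u s₀ - (1 + s₀) * intG u s₀)) s₀ := by
    intro s₀ hs₀
    obtain ⟨hs₀0, hs₀t⟩ := hs₀
    have hε : (0:ℝ) < min s₀ 1 := lt_min hs₀0 one_pos
    have hball : ∀ s ∈ Metric.ball s₀ (min s₀ 1), 0 < s ∧ s < t + 1 := by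
      intro s hs
      rw [Metric.mem_ball, Real.dist_eq] at hs
      have h1 := (abs_lt.1 hs).1
      have h2 := (abs_lt.1 hs).2
      have h3 := min_le_left s₀ 1
      have h4 := min_le_right s₀ 1
      constructor <;> linarith
    have hzu₀ : ∀ x : E2, r < ‖x‖ → u s₀ x = 0 :=
      fun x hx => hzu s₀ hs₀0.le (by linarith) x hx
    have hzV₀ : ∀ x : E2, r < ‖x‖ → Vf u (s₀, x) = 0 :=
      fun x hx => hVO (s₀, x) hs₀0 (by linarith) hx
    have hzP₀ : ∀ (i : Fin 2) (x : E2), r < ‖x‖ → Pf u i (s₀, x) = 0 :=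
      fun i x hx => hPO i (s₀, x) hs₀0 (by linarith) hx
    have hzW₀ : ∀ x : E2, r < ‖x‖ → Wf u (s₀, x) = 0 :=
      fun x hx => hWO (s₀, x) hs₀0 (by linarith) hx
    -- integrability of various integrands at s₀
    have i1 : Integrable (fun x : E2 => a x * (Vf u (s₀, x) * u s₀ x)) :=
      e2_integrable (ha.mul ((cSectV s₀).mul (cSect s₀)))
        (fun x hx => by rw [hzu₀ x hx]; ring)
    have i2 : Integrable (fun x : E2 => Vf u (s₀, x) * u s₀ x) :=
      e2_integrable ((cSectV s₀).mul (cSect s₀)) (fun x hx => by rw [hzu₀ x hx]; ring)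
    have i3 : Integrable (fun x : E2 => Wf u (s₀, x) * u s₀ x) :=
      e2_integrable ((cSectW s₀).mul (cSect s₀)) (fun x hx => by rw [hzu₀ x hx]; ring)
    have i4 : Integrable (fun x : E2 => Vf u (s₀, x) * Vf u (s₀, x)) :=
      e2_integrable ((cSectV s₀).mul (cSectV s₀)) (fun x hx => by rw [hzV₀ x hx]; ring)
    have iQ : Integrable (fun x : E2 => (∑ i : Fin 2, Qf u i (s₀, x)) * u s₀ x) :=
      e2_integrable ((continuous_finset_sum _ (fun i _ => cSectQ i s₀)).mul (cSect s₀))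
        (fun x hx => by rw [hzu₀ x hx]; ring)
    -- derivatives of the integral functions
    have hA' : HasDerivAt (intA a u)
        (∫ x : E2, a x * (Vf u (s₀, x) * u s₀ x + u s₀ x * Vf u (s₀, x))) s₀ := by
      refine hasDerivAt_param (F := fun s x => a x * (u s x * u s x))
        (F' := fun s x => a x * (Vf u (s, x) * u s x + u s x * Vf u (s, x))) (r := r) hε
        ((ha.comp continuous_snd).mul (cU.mul cU))
        ((ha.comp continuous_snd).mul ((cV.mul cU).add (cU.mul cV))) ?_ ?_ ?_
      · intro s hs x hx
        obtain ⟨h1, h2⟩ := hball s hs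
        show a x * (Vf u (s, x) * u s x + u s x * Vf u (s, x)) = 0
        rw [hVO (s, x) h1 h2 hx, hzu s h1.le h2 x hx]; ring
      · intro x hx; show a x * (u s₀ x * u s₀ x) = 0; rw [hzu₀ x hx]; ring
      · intro x s _
        exact ((hasDerivAt_Vf hu s x).mul (hasDerivAt_Vf hu s x)).const_mul (a x)
    have hB' : HasDerivAt (intB u)
        (∫ x : E2, (Wf u (s₀, x) * u s₀ x + Vf u (s₀, x) * Vf u (s₀, x))) s₀ := by
      refine hasDerivAt_param (F := fun s x => Vf u (s, x) * u s x)
        (F' := fun s x => Wf u (s, x) * u s x + Vf u (s, x) * Vf u (s, x)) (r := r) hε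
        (cV.mul cU) ((cW.mul cU).add (cV.mul cV)) ?_ ?_ ?_
      · intro s hs x hx
        obtain ⟨h1, h2⟩ := hball s hs
        show Wf u (s, x) * u s x + Vf u (s, x) * Vf u (s, x) = 0
        rw [hVO (s, x) h1 h2 hx, hzu s h1.le h2 x hx]; ring
      · intro x hx; show Vf u (s₀, x) * u s₀ x = 0; rw [hzu₀ x hx]; ring
      · intro x s _
        exact (hasDerivAt_Wf hu s x).mul (hasDerivAt_Vf hu s x)
    have hC' : HasDerivAt (intC u)
        (∫ x : E2, (Vf u (s₀, x) * u s₀ x + u s₀ x * Vf u (s₀, x))) s₀ := by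
      refine hasDerivAt_param (F := fun s x => u s x * u s x)
        (F' := fun s x => Vf u (s, x) * u s x + u s x * Vf u (s, x)) (r := r) hε
        (cU.mul cU) ((cV.mul cU).add (cU.mul cV)) ?_ ?_ ?_
      · intro s hs x hx
        obtain ⟨h1, h2⟩ := hball s hs
        show Vf u (s, x) * u s x + u s x * Vf u (s, x) = 0
        rw [hVO (s, x) h1 h2 hx, hzu s h1.le h2 x hx]; ring
      · intro x hx; show u s₀ x * u s₀ x = 0; rw [hzu₀ x hx]; ring
      · intro x s _
        exact (hasDerivAt_Vf hu s x).mul (hasDerivAt_Vf hu s x)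
    -- identities between the integral values
    have eA : (∫ x : E2, a x * (Vf u (s₀, x) * u s₀ x + u s₀ x * Vf u (s₀, x)))
        = 2 * ∫ x : E2, a x * (Vf u (s₀, x) * u s₀ x) := by
      rw [show (fun x : E2 => a x * (Vf u (s₀, x) * u s₀ x + u s₀ x * Vf u (s₀, x)))
          = fun x : E2 => a x * (Vf u (s₀, x) * u s₀ x) + a x * (Vf u (s₀, x) * u s₀ x) from
        funext fun x => by ring]
      rw [integral_add i1 i1]; ring
    have eC : (∫ x : E2, (Vf u (s₀, x) * u s₀ x + u s₀ x * Vf u (s₀, x)))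
        = 2 * intB u s₀ := by
      rw [show (fun x : E2 => Vf u (s₀, x) * u s₀ x + u s₀ x * Vf u (s₀, x))
          = fun x : E2 => Vf u (s₀, x) * u s₀ x + Vf u (s₀, x) * u s₀ x from
        funext fun x => by ring]
      rw [integral_add i2 i2]; unfold intB; ring
    have eB : (∫ x : E2, (Wf u (s₀, x) * u s₀ x + Vf u (s₀, x) * Vf u (s₀, x)))
        = (∫ x : E2, Wf u (s₀, x) * u s₀ x) + intD u s₀ := integral_add i3 i4
    have eW : (∫ x : E2, Wf u (s₀, x) * u s₀ x)
        = - intG u s₀ - ∫ x : E2, a x * (Vf u (s₀, x) * u s₀ x) := by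
      rw [show (fun x : E2 => Wf u (s₀, x) * u s₀ x)
          = fun x : E2 => (∑ i : Fin 2, Qf u i (s₀, x)) * u s₀ x
            - a x * (Vf u (s₀, x) * u s₀ x) from
        funext fun x => by rw [hpde s₀ hs₀0 x]; ring]
      rw [integral_sub iQ i1, ibp hu s₀ r hzu₀]
      rfl
    -- assemble
    have h1 : HasDerivAt (fun s : ℝ => (1 + s) / 2) ((1:ℝ) / 2) s₀ := by
      simpa using ((hasDerivAt_id s₀).const_add (1:ℝ)).div_const 2
    have h2 : HasDerivAt (fun s : ℝ => 1 + s) (1:ℝ) s₀ := by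
      simpa using (hasDerivAt_id s₀).const_add (1:ℝ)
    have hsum := ((h1.mul hA').add (h2.mul hB')).sub (hC'.const_mul ((1:ℝ) / 2))
    have hval : 1 / 2 * intA a u s₀ + (1 + s₀) / 2 *
          (∫ x : E2, a x * (Vf u (s₀, x) * u s₀ x + u s₀ x * Vf u (s₀, x)))
        + (1 * intB u s₀ + (1 + s₀) *
          (∫ x : E2, (Wf u (s₀, x) * u s₀ x + Vf u (s₀, x) * Vf u (s₀, x))))
        - 1 / 2 * (∫ x : E2, (Vf u (s₀, x) * u s₀ x + u s₀ x * Vf u (s₀, x)))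
        = (1 / 2) * intA a u s₀ + ((1 + s₀) * intD u s₀ - (1 + s₀) * intG u s₀) := by
      rw [eA, eB, eC, eW]; unfold intB; ring
    exact hval ▸ hsum
  -- FTC
  have hHcont : ContinuousOn (fun s => ((1 + s) / 2) * intA a u s + (1 + s) * intB u s -
      (1 / 2) * intC u s) (Set.Icc 0 t) :=
    ((((continuous_const.add continuous_id).div_const 2).continuousOn.mul contA).add
      (((continuous_const.add continuous_id).continuousOn).mul contB)).sub
      (continuousOn_const.mul contC)
  have hgcont : ContinuousOn (fun s => (1 / 2) * intA a u s +
      ((1 + s) * intD u s - (1 + s) * intG u s)) (Set.Icc 0 t) :=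
    (continuousOn_const.mul contA).add
      ((((continuous_const.add continuous_id).continuousOn).mul contD).sub
        (((continuous_const.add continuous_id).continuousOn).mul contG))
  have mkII : ∀ {f : ℝ → ℝ}, ContinuousOn f (Set.Icc 0 t) →
      IntervalIntegrable f volume 0 t := by
    intro f hf
    apply ContinuousOn.intervalIntegrable
    rwa [Set.uIcc_of_le ht]
  have ftc : (∫ s in (0:ℝ)..t, ((1 / 2) * intA a u s +
        ((1 + s) * intD u s - (1 + s) * intG u s)))
      = (((1 + t) / 2) * intA a u t + (1 + t) * intB u t - (1 / 2) * intC u t)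
        - (((1 + 0) / 2) * intA a u 0 + (1 + 0) * intB u 0 - (1 / 2) * intC u 0) :=
    intervalIntegral.integral_eq_sub_of_hasDeriv_right_of_le ht hHcont
      (fun s hs => (hH s hs).hasDerivWithinAt) (mkII hgcont)
  have iIA : IntervalIntegrable (fun s => (1 / 2) * intA a u s) volume 0 t :=
    mkII (continuousOn_const.mul contA)
  have iID : IntervalIntegrable (fun s => (1 + s) * intD u s) volume 0 t :=
    mkII (((continuous_const.add continuous_id).continuousOn).mul contD)
  have iIG : IntervalIntegrable (fun s => (1 + s) * intG u s) volume 0 t :=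
    mkII (((continuous_const.add continuous_id).continuousOn).mul contG)
  have hsplit : (∫ s in (0:ℝ)..t, ((1 / 2) * intA a u s +
        ((1 + s) * intD u s - (1 + s) * intG u s)))
      = (∫ s in (0:ℝ)..t, (1 / 2) * intA a u s) +
        ((∫ s in (0:ℝ)..t, (1 + s) * intD u s) - ∫ s in (0:ℝ)..t, (1 + s) * intG u s) := by
    rw [← intervalIntegral.integral_sub iID iIG,
      ← intervalIntegral.integral_add iIA (iID.sub iIG)]
  have hX : (∫ s in (0:ℝ)..t, (1 / 2) * intA a u s)
      = (1 / 2) * ∫ s in (0:ℝ)..t, intA a u s :=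
    intervalIntegral.integral_const_mul _ _
  linarith [ftc, hsplit, hX]


/-- Weighted space–time identity obtained by multiplying the equation by `(1+t)u`:
for every `t ≥ 0`,
`((1+t)/2)∫ a|u(t)|² + (1/2)‖u₀‖² + ∫₀ᵗ(1+s)‖∇u(s)‖² ds
  = K₀ − (1+t)(u_t(t),u(t)) + (1/2)‖u(t)‖² + ∫₀ᵗ(1+s)‖u_s(s)‖² ds + (1/2)∫₀ᵗ∫ a|u|²`,
where `K₀ = (u₀,u₁) + (1/2)∫ a|u₀|²`. -/
theorem weighted_spacetime_identity
    (R L ε₀ : ℝ) (hR : 0 < R) (hL : 0 < L) (hε₀ : 0 < ε₀)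
    (a : E2 → ℝ) (ha : ContDiff ℝ 2 a) (ha0 : ∀ x, 0 ≤ a x)
    (habd : ∃ M : ℝ, ∀ x, a x ≤ M)
    (haL : ∀ x : E2, L < ‖x‖ → ε₀ ≤ a x)
    (u₀ u₁ : E2 → ℝ)
    (hu₀ : ContDiff ℝ (⊤ : ℕ∞) u₀) (hu₁ : ContDiff ℝ (⊤ : ℕ∞) u₁)
    (hsupp₀ : Function.support u₀ ⊆ Metric.closedBall 0 R)
    (hsupp₁ : Function.support u₁ ⊆ Metric.closedBall 0 R)
    (u : ℝ → E2 → ℝ)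
    (hu : ContDiff ℝ (⊤ : ℕ∞) (fun p : ℝ × E2 => u p.1 p.2))
    (hpde : ∀ t : ℝ, 0 < t → ∀ x : E2,
      deriv (fun s => dt u s x) t - lap (u t) x + a x * dt u t x = 0)
    (hic0 : ∀ x, u 0 x = u₀ x) (hic1 : ∀ x, dt u 0 x = u₁ x)
    (hfin : ∀ t : ℝ, 0 ≤ t → ∀ x : E2, R + t < ‖x‖ → u t x = 0) :
    ∀ t : ℝ, 0 ≤ t →
      ((1 + t) / 2) * (∫ x : E2, a x * (u t x) ^ 2) +
          (1 / 2) * (∫ x : E2, (u₀ x) ^ 2) +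
          (∫ s in (0 : ℝ)..t, (1 + s) * ∫ x : E2, ‖gradient (u s) x‖ ^ 2) =
        ((∫ x : E2, u₀ x * u₁ x) + (1 / 2) * (∫ x : E2, a x * (u₀ x) ^ 2)) -
          (1 + t) * (∫ x : E2, dt u t x * u t x) +
          (1 / 2) * (∫ x : E2, (u t x) ^ 2) +
          (∫ s in (0 : ℝ)..t, (1 + s) * ∫ x : E2, (dt u s x) ^ 2) +
          (1 / 2) * ∫ s in (0 : ℝ)..t, ∫ x : E2, a x * (u s x) ^ 2 := by
  intro t ht
  have hdt : ∀ (s : ℝ) (x : E2), dt u s x = Vf u (s, x) := dt_eq_Vf hu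
  have hgr : ∀ (s : ℝ) (x : E2), ‖gradient (u s) x‖ * ‖gradient (u s) x‖
      = ∑ i : Fin 2, Pf u i (s, x) * Pf u i (s, x) := grad_sq_eq hu
  have hpde' : ∀ s : ℝ, 0 < s → ∀ x : E2,
      Wf u (s, x) = (∑ i : Fin 2, Qf u i (s, x)) - a x * Vf u (s, x) := by
    intro s hs x
    have h := hpde s hs x
    rw [deriv_dt_eq_Wf hu, lap_eq hu, hdt] at h
    linarith
  have hV0 : ∀ x : E2, R < ‖x‖ → Vf u (0, x) = 0 := by
    intro x hx
    rw [← hdt 0 x, hic1 x]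
    by_contra hne
    have hmem := hsupp₁ (Function.mem_support.2 hne)
    rw [Metric.mem_closedBall, dist_zero_right] at hmem
    linarith
  have core := main_core R t ht a (ha.continuous) u hu hfin hV0 hpde'
  have eB0 : intB u 0 = ∫ x : E2, u₀ x * u₁ x := by
    unfold intB
    rw [show (fun x : E2 => Vf u (0, x) * u 0 x) = fun x : E2 => u₀ x * u₁ x from
      funext fun x => by rw [← hdt 0 x, hic1 x, hic0 x, mul_comm]]
  have eA0 : intA a u 0 = ∫ x : E2, a x * (u₀ x * u₀ x) := by
    unfold intA
    rw [show (fun x : E2 => a x * (u 0 x * u 0 x)) = fun x : E2 => a x * (u₀ x * u₀ x) from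
      funext fun x => by rw [hic0 x]]
  have eC0 : intC u 0 = ∫ x : E2, u₀ x * u₀ x := by
    unfold intC
    rw [show (fun x : E2 => u 0 x * u 0 x) = fun x : E2 => u₀ x * u₀ x from
      funext fun x => by rw [hic0 x]]
  rw [eB0, eA0, eC0] at core
  simp only [pow_two] at core ⊢
  simp only [hdt, hgr]
  exact core
end
end
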